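/- Let α and β be classical propositional formulas such that every valuation on B_α ∪ B_β that satisfies α also satisfies β (i.e. α classically entails β). Then Prob(α) ≤ Prob(β). -/

import Mathlib

open scoped InnerProductSpace

noncomputable section

/-- Classical propositional formulas, built from propositional symbols `B_j` (`j : ℕ`)
and `⊤` using `¬` and `→`. -/
inductive PropForm : Type
  | verum : PropForm
  | var : ℕ → PropForm
  | neg : PropForm → PropForm
  | imp : PropForm → PropForm → PropForm

namespace PropForm

/-- The (finite) set of propositional symbols occurring in a formula. -/
def symbols : PropForm → Finset ℕ
  | verum => ∅
  | var n => {n}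
  | neg a => a.symbols
  | imp a b => a.symbols ∪ b.symbols

/-- Truth-table evaluation of a formula under a (total) assignment of truth values. -/
def eval (w : ℕ → Bool) : PropForm → Bool
  | verum => true
  | var n => w n
  | neg a => !(a.eval w)
  | imp a b => !(a.eval w) || b.eval w

end PropForm

/-- A valuation `v` on a set `A` of propositional symbols (with `A ⊇ B_α`) satisfies `α`. -/
def Sat (A : Finset ℕ) (v : {n // n ∈ A} → Bool) (α : PropForm) : Prop :=
  PropForm.eval (fun n => if h : n ∈ A then v ⟨n, h⟩ else false) α = true

instance (A : Finset ℕ) (α : PropForm) : DecidablePred (fun v => Sat A v α) := fun _ => by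
  unfold Sat; infer_instance

variable {ι H : Type*} [NormedAddCommGroup H] [InnerProductSpace ℂ H] [CompleteSpace H]

/-- `Hs u S` is the topological closure of the linear span of `{u i : i ∈ S}`. -/
def Hs (u : HilbertBasis ι ℂ H) (S : Set ι) : Submodule ℂ H :=
  (Submodule.span ℂ ((fun i => u i) '' S)).topologicalClosure

instance (u : HilbertBasis ι ℂ H) (S : Set ι) : (Hs u S).HasOrthogonalProjection :=
  haveI : CompleteSpace (Hs u S) :=
    IsClosed.completeSpace_coe (hs := Submodule.isClosed_topologicalClosure _)
  Submodule.HasOrthogonalProjection.ofCompleteSpace _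

/-- The orthogonal projection of `H` onto `Hs u S`, as an operator on `H`. -/
def P (u : HilbertBasis ι ℂ H) (S : Set ι) : H →L[ℂ] H :=
  (Hs u S).subtypeL.comp ((Hs u S).orthogonalProjectionOnto)

/-- `Pj u lam j S` is the orthogonal projection onto the closure of the span of
`{u i : lam j i ∈ S}`. -/
def Pj (u : HilbertBasis ι ℂ H) (lam : ℕ → ι → ℝ) (j : ℕ) (S : Set ℝ) : H →L[ℂ] H :=
  P u {i | lam j i ∈ S}

/-- `Prob u lam up ψ α` is the probability assigned to the classical formula `α`:
the sum, over the valuations `v` on `B_α` satisfying `α`, of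
`Re ⟪ψ, P_{j_k}(D_{j_k}^v)(⋯ (P_{j_1}(D_{j_1}^v) ψ) ⋯)⟫` where `B_α = {j_1 < … < j_k}`
and `D_j^v` is `up j` if `v (B_j) = 1` and its complement otherwise. -/
def Prob (u : HilbertBasis ι ℂ H) (lam : ℕ → ι → ℝ) (up : ℕ → Set ℝ) (ψ : H)
    (α : PropForm) : ℝ :=
  ∑ v ∈ Finset.univ.filter (fun v : {n // n ∈ α.symbols} → Bool => Sat α.symbols v α),
    (⟪ψ, (α.symbols.sort (· ≤ ·)).foldl
        (fun x j => if h : j ∈ α.symbols then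
            Pj u lam j (if v ⟨j, h⟩ then up j else (up j)ᶜ) x
          else x) ψ⟫_ℂ).re

/-!
Every `P_j(S)` is diagonal in the Hilbert basis: it keeps the coordinates `⟪u i, x⟫` with
`λ_j(i) ∈ S` and kills the others. A composite of such projections is therefore the projection
onto the basis vectors lying in all the chosen sets, and the term of `Prob(α)` indexed by a
valuation `v` is the sum of `|⟪u i, ψ⟫|²` over those `i` whose own valuation
`B_j ↦ (λ_j(i) ∈ ↑_j)` restricts to `v`. Summing over the `v` satisfying `α` gives
`Prob(α) = ∑ |⟪u i, ψ⟫|²` over the `i` whose valuation satisfies `α`; entailment makes this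
index set grow from `α` to `β`.
-/

namespace PropForm

theorem eval_congr {w w' : ℕ → Bool} :
    ∀ α : PropForm, (∀ n ∈ α.symbols, w n = w' n) → α.eval w = α.eval w'
  | verum, _ => rfl
  | var n, h => h n (Finset.mem_singleton_self n)
  | neg a, h => by rw [eval, eval, eval_congr a h]
  | imp a b, h => by
      rw [eval, eval, eval_congr a fun n hn => h n (Finset.mem_union_left _ hn),
        eval_congr b fun n hn => h n (Finset.mem_union_right _ hn)]

end PropForm

theorem sat_iff_eval {A : Finset ℕ} {α : PropForm} (hα : α.symbols ⊆ A) (w : ℕ → Bool) :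
    Sat A (fun n => w n) α ↔ α.eval w = true := by
  rw [Sat, PropForm.eval_congr α fun n hn => dif_pos (hα hn)]

theorem eval_imp_of_entails {α β : PropForm}
    (hent : ∀ w : {n // n ∈ α.symbols ∪ β.symbols} → Bool,
        Sat (α.symbols ∪ β.symbols) w α → Sat (α.symbols ∪ β.symbols) w β)
    (w : ℕ → Bool) (hα : α.eval w = true) : β.eval w = true :=
  (sat_iff_eval Finset.subset_union_right w).1 <|
    hent _ ((sat_iff_eval Finset.subset_union_left w).2 hα)

theorem HilbertBasis.summable_norm_repr_sq {𝕜 E : Type*} [RCLike 𝕜] [NormedAddCommGroup E]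
    [InnerProductSpace 𝕜 E] (b : HilbertBasis ι 𝕜 E) (x : E) :
    Summable fun i => ‖b.repr x i‖ ^ 2 := by
  simpa using (lp.memℓp (b.repr x)).summable (by norm_num)

section Projections

variable (u : HilbertBasis ι ℂ H)

theorem P_eq_starProjection (S : Set ι) : P u S = (Hs u S).starProjection := rfl

omit [CompleteSpace H] in
theorem basis_mem_Hs {S : Set ι} {i : ι} (hi : i ∈ S) : (u i : H) ∈ Hs u S :=
  Submodule.le_topologicalClosure _ (Submodule.subset_span ⟨i, hi, rfl⟩)

omit [CompleteSpace H] in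
theorem basis_mem_orthogonal_Hs {S : Set ι} {i : ι} (hi : i ∉ S) : (u i : H) ∈ (Hs u S)ᗮ := by
  rw [Hs, Submodule.orthogonal_closure]
  have hortho : (ℂ ∙ (u i : H)) ⟂ Submodule.span ℂ ((fun i => u i) '' S) := by
    refine Submodule.isOrtho_span.2 ?_
    rintro _ rfl _ ⟨j, hj, rfl⟩
    exact u.orthonormal.2 fun hij => hi (hij ▸ hj)
  exact Submodule.isOrtho_iff_le.1 hortho (Submodule.mem_span_singleton_self _)

theorem repr_P (S : Set ι) (x : H) :
    (u.repr (P u S x) : ι → ℂ) = S.indicator (u.repr x) := by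
  ext i
  rw [u.repr_apply_apply, P_eq_starProjection, ← Submodule.inner_starProjection_left_eq_right]
  by_cases hi : i ∈ S
  · rw [Set.indicator_of_mem hi, u.repr_apply_apply,
      Submodule.starProjection_eq_self_iff.2 (basis_mem_Hs u hi)]
  · rw [Set.indicator_of_notMem hi,
      (Submodule.starProjection_apply_eq_zero_iff _).2 (basis_mem_orthogonal_Hs u hi),
      inner_zero_left]

theorem P_univ (x : H) : P u Set.univ x = x :=
  u.repr.injective <| lp.ext <| by rw [repr_P, Set.indicator_univ]

theorem P_apply_P (S T : Set ι) (x : H) : P u S (P u T x) = P u (S ∩ T) x :=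
  u.repr.injective <| lp.ext <| by rw [repr_P, repr_P, repr_P, Set.indicator_indicator]

theorem foldl_P {κ : Type*} (D : κ → Set ι) :
    ∀ (l : List κ) (x : H), l.foldl (fun y j => P u (D j) y) x = P u {i | ∀ j ∈ l, i ∈ D j} x
  | [], x => by simpa using (P_univ u x).symm
  | j :: l, x => by
      rw [List.foldl_cons, foldl_P D l, P_apply_P]
      congr 2
      ext i
      simp [and_comm]

theorem re_inner_P_self (S : Set ι) (x : H) :
    (⟪x, P u S x⟫_ℂ).re = ∑' i, S.indicator (fun i => ‖u.repr x i‖ ^ 2) i := by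
  rw [← u.repr.inner_map_map, lp.inner_eq_tsum, Complex.re_tsum (lp.summable_inner _ _)]
  refine tsum_congr fun i => ?_
  rw [repr_P]
  by_cases hi : i ∈ S <;> simp [hi, inner_self_eq_norm_sq_to_K, ← Complex.ofReal_pow]

open Classical in
def basisValuation (lam : ℕ → ι → ℝ) (up : ℕ → Set ℝ) (i : ι) : ℕ → Bool :=
  fun j => decide (lam j i ∈ up j)

theorem foldl_Pj_eq_P (lam : ℕ → ι → ℝ) (up : ℕ → Set ℝ) (A : Finset ℕ)
    (v : {n // n ∈ A} → Bool) (x : H) :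
    (A.sort (· ≤ ·)).foldl (fun y j => if h : j ∈ A then
        Pj u lam j (if v ⟨j, h⟩ then up j else (up j)ᶜ) y else y) x
      = P u {i | (fun n : {n // n ∈ A} => basisValuation lam up i n) = v} x := by
  let D : ℕ → Set ι := fun j =>
    if h : j ∈ A then {i | lam j i ∈ if v ⟨j, h⟩ then up j else (up j)ᶜ} else Set.univ
  have hstep : (fun y j => if h : j ∈ A then
      Pj u lam j (if v ⟨j, h⟩ then up j else (up j)ᶜ) y else y) = fun y j => P u (D j) y := by
    funext y j
    by_cases h : j ∈ A
    · simp only [D, dif_pos h, Pj]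
    · simp only [D, dif_neg h, P_univ]
  rw [hstep, foldl_P]
  congr 2
  ext i
  simp only [Finset.mem_sort, Set.mem_ofPred_eq, funext_iff, Subtype.forall]
  refine forall₂_congr fun j hj => ?_
  simp only [D, dif_pos hj, basisValuation]
  cases v ⟨j, hj⟩ <;> simp

theorem Prob_eq_tsum (lam : ℕ → ι → ℝ) (up : ℕ → Set ℝ) (ψ : H) (α : PropForm) :
    Prob u lam up ψ α
      = ∑' i, {i | α.eval (basisValuation lam up i)}.indicator (fun i => ‖u.repr ψ i‖ ^ 2) i := by
  classical
  simp only [Prob, foldl_Pj_eq_P, re_inner_P_self]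
  rw [← Summable.tsum_finsetSum fun v _ => (u.summable_norm_repr_sq ψ).indicator _]
  refine tsum_congr fun i => ?_
  simp only [Set.indicator_apply, Set.mem_ofPred_eq, Finset.sum_ite_eq, Finset.mem_filter,
    Finset.mem_univ, true_and, sat_iff_eval subset_rfl]

end Projections

theorem stmt7_general (u : HilbertBasis ι ℂ H) (ψ : H) (lam : ℕ → ι → ℝ) (up : ℕ → Set ℝ)
    (α β : PropForm)
    (hent : ∀ w : {n // n ∈ α.symbols ∪ β.symbols} → Bool,
        Sat (α.symbols ∪ β.symbols) w α → Sat (α.symbols ∪ β.symbols) w β) :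
    Prob u lam up ψ α ≤ Prob u lam up ψ β := by
  have hsum := u.summable_norm_repr_sq ψ
  rw [Prob_eq_tsum, Prob_eq_tsum]
  refine Summable.tsum_le_tsum (fun i => ?_) (hsum.indicator _) (hsum.indicator _)
  exact Set.indicator_le_indicator_of_subset (fun _ => eval_imp_of_entails hent _)
    (fun _ => sq_nonneg _) i

/-- If every valuation on `B_α ∪ B_β` satisfying `α` also satisfies `β`
(`α` classically entails `β`), then `Prob(α) ≤ Prob(β)`. -/
theorem stmt7 (u : HilbertBasis ι ℂ H) (ψ : H) (hψ : ‖ψ‖ = 1)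
    (O : ℕ → H →L[ℂ] H) (lam : ℕ → ι → ℝ)
    (heig : ∀ j i, O j (u i) = (lam j i : ℂ) • u i) (up : ℕ → Set ℝ) (α β : PropForm)
    (hent : ∀ w : {n // n ∈ α.symbols ∪ β.symbols} → Bool,
        Sat (α.symbols ∪ β.symbols) w α → Sat (α.symbols ∪ β.symbols) w β) :
    Prob u lam up ψ α ≤ Prob u lam up ψ β :=
  stmt7_general u ψ lam up α β hent
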